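/- arXiv:math/0009029 — 5 statements merged into one kernel-verified Lean document; each statement's English description precedes it below -/
import Mathlib

section
/- Let λ ∈ ℂ with λ ≠ 0 and λ^n ≠ λ for all integers n ≥ 2 (non-resonance). Then for every formal power series f(z) = λz + Σ_{n≥2} a_n z^n there exists a unique formal power series h(z) = z + Σ_{n≥2} h_n z^n such that h ∘ f = λ · h as formal power series. -/
open PowerSeries

/-!
Since `f = λ z + O(z²)`, the `n`-th coefficient of `h ∘ f` is `λⁿ hₙ` plus a combination of
`h₀, …, hₙ₋₁`. Comparing with `λ hₙ` gives `(λ - λⁿ) hₙ = ∑_{k<n} hₖ [zⁿ] fᵏ`, and non-resonance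
makes `λ - λⁿ` invertible for `n ≥ 2`, so the coefficients are determined by, and can be defined
through, this recursion starting from `h₀ = 0`, `h₁ = 1`.
-/

/-- Composition of formal power series: `compPS g f` is `g ∘ f`
(substitute `f` into `g`); correct when `f` has zero constant term. -/
noncomputable def compPS (g f : PowerSeries ℂ) : PowerSeries ℂ :=
  PowerSeries.mk fun n =>
    ∑ k ∈ Finset.range (n + 1), PowerSeries.coeff k g * PowerSeries.coeff n (f ^ k)

namespace PowerSeries

theorem coeff_self_pow_of_constantCoeff_eq_zero {R : Type*} [CommSemiring R] {f : R⟦X⟧}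
    (hf0 : constantCoeff f = 0) (n : ℕ) : coeff n (f ^ n) = coeff 1 f ^ n := by
  obtain ⟨g, rfl⟩ := X_dvd_iff.mpr hf0
  rw [mul_pow, coeff_X_pow_mul', if_pos le_rfl, Nat.sub_self, coeff_zero_eq_constantCoeff,
    map_pow, coeff_succ_X_mul, coeff_zero_eq_constantCoeff]

end PowerSeries

variable {lam : ℂ} {f : PowerSeries ℂ}

theorem coeff_compPS (hf0 : constantCoeff f = 0) (g : PowerSeries ℂ) (n : ℕ) :
    coeff n (compPS g f) =
      ∑ k ∈ Finset.range n, coeff k g * coeff n (f ^ k) + coeff n g * coeff 1 f ^ n := by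
  rw [compPS, coeff_mk, Finset.sum_range_succ, coeff_self_pow_of_constantCoeff_eq_zero hf0]

theorem compPS_eq_smul_iff (hf0 : constantCoeff f = 0) (hf1 : coeff 1 f = lam)
    {h : PowerSeries ℂ} (h0 : constantCoeff h = 0) :
    compPS h f = lam • h ↔ ∀ n, 2 ≤ n →
      (lam - lam ^ n) * coeff n h = ∑ k ∈ Finset.range n, coeff k h * coeff n (f ^ k) := by
  simp only [PowerSeries.ext_iff, coeff_compPS hf0, coeff_smul, smul_eq_mul, hf1]
  refine ⟨fun H n _ => by linear_combination -H n, fun H n => ?_⟩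
  rcases n with _ | _ | n
  · simp [h0]
  · simp [h0, mul_comm]
  · linear_combination -H (n + 2) (by omega)

variable (lam f) in
/-- Junk (division by zero) unless `λⁿ ≠ λ` for all `n ≥ 2`. -/
noncomputable def linearizationCoeff : ℕ → ℂ
  | 0 => 0
  | 1 => 1
  | n + 2 => (∑ k : Fin (n + 2), linearizationCoeff k * coeff (n + 2) (f ^ (k : ℕ))) /
      (lam - lam ^ (n + 2))

theorem linearizationCoeff_rec (hres : ∀ n : ℕ, 2 ≤ n → lam ^ n ≠ lam) (n : ℕ) (hn : 2 ≤ n) :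
    (lam - lam ^ n) * linearizationCoeff lam f n =
      ∑ k ∈ Finset.range n, linearizationCoeff lam f k * coeff n (f ^ k) := by
  obtain ⟨n, rfl⟩ := Nat.exists_eq_add_of_le' hn
  rw [linearizationCoeff, Fin.sum_univ_eq_sum_range (fun k => linearizationCoeff lam f k *
    coeff (n + 2) (f ^ k)), mul_div_cancel₀ _ (sub_ne_zero.mpr (hres (n + 2) hn).symm)]

theorem eq_linearizationCoeff (hres : ∀ n : ℕ, 2 ≤ n → lam ^ n ≠ lam) {c : ℕ → ℂ}
    (c0 : c 0 = 0) (c1 : c 1 = 1)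
    (hc : ∀ n, 2 ≤ n → (lam - lam ^ n) * c n = ∑ k ∈ Finset.range n, c k * coeff n (f ^ k))
    (n : ℕ) : c n = linearizationCoeff lam f n := by
  induction n using Nat.strong_induction_on with
  | _ n ih =>
    rcases n with _ | _ | n
    · rw [c0, linearizationCoeff]
    · rw [c1, linearizationCoeff]
    · have hn : 2 ≤ n + 2 := by omega
      refine mul_left_cancel₀ (sub_ne_zero.mpr (hres (n + 2) hn).symm) ?_
      rw [hc _ hn, linearizationCoeff_rec hres _ hn]
      exact Finset.sum_congr rfl fun k hk => by rw [ih k (Finset.mem_range.mp hk)]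

theorem formal_linearization_exists_unique_general (lam : ℂ)
    (hres : ∀ n : ℕ, 2 ≤ n → lam ^ n ≠ lam)
    (f : PowerSeries ℂ) (hf0 : PowerSeries.constantCoeff f = 0)
    (hf1 : PowerSeries.coeff 1 f = lam) :
    ∃! h : PowerSeries ℂ,
      PowerSeries.constantCoeff h = 0 ∧ PowerSeries.coeff 1 h = 1 ∧
        compPS h f = lam • h := by
  have hL0 : constantCoeff (mk (linearizationCoeff lam f)) = 0 := by
    rw [← coeff_zero_eq_constantCoeff_apply, coeff_mk, linearizationCoeff]
  refine ⟨mk (linearizationCoeff lam f), ⟨hL0, by rw [coeff_mk, linearizationCoeff], ?_⟩, ?_⟩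
  · rw [compPS_eq_smul_iff hf0 hf1 hL0]
    simpa only [coeff_mk] using linearizationCoeff_rec hres
  · rintro h ⟨h0, h1, hh⟩
    ext n
    rw [coeff_mk]
    exact eq_linearizationCoeff hres (c := fun n => coeff n h)
      (by rwa [coeff_zero_eq_constantCoeff_apply]) h1 ((compPS_eq_smul_iff hf0 hf1 h0).mp hh) n

/-- For a non-resonant multiplier `λ` (λ ≠ 0 and `λ^n ≠ λ` for n ≥ 2), every formal
power series `f = λ z + O(z²)` admits a unique formal linearization `h = z + O(z²)`
with `h ∘ f = λ • h`. -/
theorem formal_linearization_exists_unique (lam : ℂ) (hlam0 : lam ≠ 0)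
    (hres : ∀ n : ℕ, 2 ≤ n → lam ^ n ≠ lam)
    (f : PowerSeries ℂ) (hf0 : PowerSeries.constantCoeff f = 0)
    (hf1 : PowerSeries.coeff 1 f = lam) :
    ∃! h : PowerSeries ℂ,
      PowerSeries.constantCoeff h = 0 ∧ PowerSeries.coeff 1 h = 1 ∧
        compPS h f = lam • h :=
  formal_linearization_exists_unique_general lam hres f hf0 hf1
end

section
/- Let λ = e^{2πiα} with α irrational, and suppose there exists a sequence q_k → ∞ with |λ^{q_k} − 1|^{1/q_k} → 0 faster than any geometric rate, specifically liminf_{q→∞} |λ^q − 1|^{1/q} = 0. Then there exists a formal power series f(z) = λz + Σ_{n≥2} a_n z^n with all |a_n| ≤ 1 whose formal linearization h satisfies limsup_n |h_n|^{1/n} = ∞; in particular h has radius of convergence 0. -/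
open PowerSeries Filter

/-! Comparing coefficients of `z^n` in `h ∘ f = λ h` gives `(λ - λ^n) h_n = a_n + S_n`, where `S_n`
involves only the coefficients `a_m`, `h_m` with `m < n`. So `f` can be built recursively with
`a_n = ±1` chosen of the sign of `Re S_n`, which makes `|a_n + S_n| ≥ 1` and hence
`|h_{q+1}| ≥ 1 / |λ^q - 1|`. Along the `q` where `|λ^q - 1|^{1/q}` is tiny, `|h_{q+1}|^{1/(q+1)}` is
then huge. -/

namespace PowerSeries

variable {R : Type*}

theorem coeff_self_pow [CommSemiring R] {f : R⟦X⟧} (hf : constantCoeff f = 0) (k : ℕ) :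
    coeff k (f ^ k) = coeff 1 f ^ k := by
  obtain ⟨g, rfl⟩ := X_dvd_iff.2 hf
  simpa [mul_pow] using coeff_X_pow_mul (g ^ k) k 0

theorem coeff_pow_eq_of_coeff_eq [CommRing R] {f g : R⟦X⟧} (hf : constantCoeff f = 0)
    (hg : constantCoeff g = 0) {n k : ℕ} (hfg : ∀ m < n, coeff m f = coeff m g) (hk : 2 ≤ k) :
    coeff n (f ^ k) = coeff n (g ^ k) := by
  -- `f ^ k - g ^ k = (∑ i < k, f ^ i g ^ (k - 1 - i)) (f - g)`, divisible by `X ^ (k - 1) X ^ n`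
  have hdiff : X ^ n ∣ f - g := X_pow_dvd_iff.2 fun m hm => by simp [hfg m hm]
  have hsum : X ^ (k - 1) ∣ ∑ i ∈ Finset.range k, f ^ i * g ^ (k - 1 - i) :=
    Finset.dvd_sum fun i hi => by
      have hik : k - 1 = i + (k - 1 - i) := by have := Finset.mem_range.1 hi; omega
      calc (X : R⟦X⟧) ^ (k - 1) = X ^ i * X ^ (k - 1 - i) := by rw [← pow_add, ← hik]
        _ ∣ f ^ i * g ^ (k - 1 - i) :=
          mul_dvd_mul (pow_dvd_pow_of_dvd (X_dvd_iff.2 hf) i)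
            (pow_dvd_pow_of_dvd (X_dvd_iff.2 hg) _)
  have hdvd : X ^ (n + 1) ∣ f ^ k - g ^ k := by
    rw [← geom_sum₂_mul]
    calc (X : R⟦X⟧) ^ (n + 1) ∣ X ^ (k - 1 + n) := pow_dvd_pow X (by omega)
      _ ∣ _ := pow_add (X : R⟦X⟧) (k - 1) n ▸ mul_dvd_mul hsum hdiff
  rw [← sub_eq_zero, ← map_sub]
  exact X_pow_dvd_iff.1 hdvd n n.lt_succ_self

noncomputable def compMiddleCoeff [CommSemiring R] (h f : R⟦X⟧) (n : ℕ) : R :=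
  ∑ k ∈ Finset.Ico 2 n, coeff k h * coeff n (f ^ k)

theorem compMiddleCoeff_congr [CommRing R] {h h' f f' : R⟦X⟧} {n : ℕ}
    (hf : constantCoeff f = 0) (hf' : constantCoeff f' = 0) (hh : ∀ m < n, coeff m h = coeff m h')
    (hff : ∀ m < n, coeff m f = coeff m f') : compMiddleCoeff h f n = compMiddleCoeff h' f' n :=
  Finset.sum_congr rfl fun k hk => by
    obtain ⟨hk2, hkn⟩ := Finset.mem_Ico.1 hk
    rw [hh k hkn, coeff_pow_eq_of_coeff_eq hf hf' hff hk2]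

end PowerSeries

theorem sub_pow_ne_zero_of_not_isOfFinOrder {R : Type*} [Ring R] [NoZeroDivisors R] {x : R}
    (hx : x ≠ 0) (hfin : ¬IsOfFinOrder x) {n : ℕ} (hn : 2 ≤ n) : x - x ^ n ≠ 0 := by
  obtain ⟨q, rfl⟩ : ∃ q, n = q + 1 := ⟨n - 1, by omega⟩
  rw [pow_succ', ← mul_one_sub]
  refine mul_ne_zero hx (sub_ne_zero.2 fun h1 => hfin ?_)
  exact isOfFinOrder_iff_pow_eq_one.2 ⟨q, by omega, h1.symm⟩

theorem not_isOfFinOrder_exp_of_irrational {α : ℝ} (hα : Irrational α) :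
    ¬IsOfFinOrder (Complex.exp (2 * Real.pi * Complex.I * α)) := by
  rw [isOfFinOrder_iff_pow_eq_one]
  rintro ⟨q, hq, hpow⟩
  obtain ⟨m, hm⟩ := Complex.exp_eq_one_iff.1 (by rwa [← Complex.exp_nat_mul] at hpow)
  have hqm : ((q * α : ℝ) : ℂ) = (m : ℝ) := by
    push_cast
    exact mul_right_cancel₀ Complex.two_pi_I_ne_zero (by linear_combination hm)
  exact (hα.natCast_mul hq.ne').ne_int m (Complex.ofReal_injective hqm)

theorem frequently_lt_rpow_inv_of_one_le_mul {r b : ℕ → ℝ} (hr : ∀ q, 0 ≤ r q)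
    (hb : ∀ q, q ≠ 0 → 1 ≤ r q * b (q + 1))
    (hsmall : ∀ ε : ℝ, 0 < ε → ∃ᶠ q : ℕ in atTop, r q ^ (q : ℝ)⁻¹ < ε) (C : ℝ) :
    ∃ᶠ n : ℕ in atTop, C < b n ^ (n : ℝ)⁻¹ := by
  set M := max C 1
  have hM : 1 ≤ M := le_max_right C 1
  refine (tendsto_add_atTop_nat 1).frequently
    (((hsmall (M ^ 2)⁻¹ (by positivity)).and_eventually (eventually_ne_atTop 0)).mono ?_)
  rintro q ⟨hrq, hq⟩
  have hq' : (0 : ℝ) < q := by positivity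
  have hbq := hb q hq
  have hr0 : 0 < r q := lt_of_le_of_ne (hr q) fun h => by
    rw [← h, zero_mul] at hbq
    exact absurd hbq (by norm_num)
  rw [Real.rpow_inv_lt_iff_of_pos (hr q) (by positivity) hq', Real.rpow_natCast] at hrq
  have hpow : M ^ (q + 1) < b (q + 1) :=
    calc M ^ (q + 1) ≤ M ^ (2 * q) := pow_le_pow_right₀ hM (by omega)
      _ = (((M ^ 2)⁻¹) ^ q)⁻¹ := by rw [inv_pow, inv_inv, pow_mul]
      _ < (r q)⁻¹ := inv_strictAnti₀ hr0 hrq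
      _ ≤ b (q + 1) := (inv_le_iff_one_le_mul₀' hr0).2 hbq
  calc C ≤ M := le_max_left C 1
    _ < b (q + 1) ^ ((q + 1 : ℕ) : ℝ)⁻¹ := by
      rw [Real.lt_rpow_inv_iff_of_pos (by positivity)
        ((pow_nonneg (zero_le_one.trans hM) _).trans hpow.le) (by positivity), Real.rpow_natCast]
      exact hpow

theorem linearization_coeff_eq {lam : ℂ} {f h : ℂ⟦X⟧} (hf0 : constantCoeff f = 0)
    (hf1 : coeff 1 f = lam) (hh0 : constantCoeff h = 0) (hh1 : coeff 1 h = 1)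
    (heq : compPS h f = lam • h) {n : ℕ} (hn : 2 ≤ n) :
    (lam - lam ^ n) * coeff n h = coeff n f + compMiddleCoeff h f n := by
  have hcoeff := congrArg (coeff n) heq
  rw [compPS, coeff_mk, Finset.sum_range_succ, Finset.range_eq_Ico,
    Finset.sum_eq_sum_Ico_succ_bot (by omega), Finset.sum_eq_sum_Ico_succ_bot (by omega),
    coeff_self_pow hf0, hf1, map_smul, smul_eq_mul] at hcoeff
  simp only [coeff_zero_eq_constantCoeff, hh0, hh1, zero_mul, zero_add, pow_one, one_mul]
    at hcoeff
  rw [compMiddleCoeff]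
  linear_combination -hcoeff

noncomputable def cremerChoice (S : ℂ) : ℂ := if 0 ≤ S.re then 1 else -1

theorem norm_cremerChoice (S : ℂ) : ‖cremerChoice S‖ = 1 := by
  unfold cremerChoice; split_ifs <;> simp

theorem one_le_norm_cremerChoice_add (S : ℂ) : 1 ≤ ‖cremerChoice S + S‖ := by
  refine le_trans ?_ (Complex.abs_re_le_norm _)
  rw [Complex.add_re, le_abs]
  unfold cremerChoice
  split_ifs with hS
  · left; simp only [Complex.one_re]; linarith
  · right; simp only [Complex.neg_re, Complex.one_re]; linarith

/-- The pair `(a_n, h_n)` of `n`-th coefficients of Cremer's series `f` and of its linearization;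
`below` truncates to the coefficients already built, which does not change `S_n`. -/
noncomputable def cremerCoeffs (lam : ℂ) (n : ℕ) : ℂ × ℂ :=
  if n = 0 then (0, 0) else if n = 1 then (lam, 1) else
    let below (c : ℂ × ℂ → ℂ) : ℂ⟦X⟧ :=
      mk fun m => if _ : m < n then c (cremerCoeffs lam m) else 0
    let S := compMiddleCoeff (below Prod.snd) (below Prod.fst) n
    (cremerChoice S, (cremerChoice S + S) / (lam - lam ^ n))
termination_by n

noncomputable def cremerSeries (lam : ℂ) : ℂ⟦X⟧ := mk fun n => (cremerCoeffs lam n).1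

noncomputable def cremerLinearization (lam : ℂ) : ℂ⟦X⟧ := mk fun n => (cremerCoeffs lam n).2

theorem cremerCoeffs_zero (lam : ℂ) : cremerCoeffs lam 0 = (0, 0) := by
  rw [cremerCoeffs, if_pos rfl]

theorem constantCoeff_cremerSeries (lam : ℂ) : constantCoeff (cremerSeries lam) = 0 := by
  rw [← coeff_zero_eq_constantCoeff_apply, cremerSeries, coeff_mk, cremerCoeffs_zero]

theorem coeff_one_cremerSeries (lam : ℂ) : coeff 1 (cremerSeries lam) = lam := by
  rw [cremerSeries, coeff_mk, cremerCoeffs, if_neg one_ne_zero, if_pos rfl]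

theorem cremerCoeffs_of_two_le (lam : ℂ) {n : ℕ} (hn : 2 ≤ n) :
    cremerCoeffs lam n =
      let S := compMiddleCoeff (cremerLinearization lam) (cremerSeries lam) n
      (cremerChoice S, (cremerChoice S + S) / (lam - lam ^ n)) := by
  have hbelow (c : ℂ × ℂ → ℂ) (m : ℕ) (hm : m < n) :
      coeff m (mk fun m => if _ : m < n then c (cremerCoeffs lam m) else 0) =
        coeff m (mk fun m => c (cremerCoeffs lam m)) := by
    rw [coeff_mk, coeff_mk, dif_pos hm]
  rw [cremerCoeffs, if_neg (by omega), if_neg (by omega)]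
  dsimp only
  rw [compMiddleCoeff_congr (h' := cremerLinearization lam) (f' := cremerSeries lam)
    (by rw [← coeff_zero_eq_constantCoeff_apply, hbelow _ 0 (by omega), coeff_mk,
      cremerCoeffs_zero])
    (constantCoeff_cremerSeries lam) (hbelow Prod.snd) (hbelow Prod.fst)]

theorem coeff_cremerSeries_of_two_le (lam : ℂ) {n : ℕ} (hn : 2 ≤ n) :
    coeff n (cremerSeries lam) =
      cremerChoice (compMiddleCoeff (cremerLinearization lam) (cremerSeries lam) n) :=
  (coeff_mk _ _).trans (congrArg Prod.fst (cremerCoeffs_of_two_le lam hn))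

theorem coeff_cremerLinearization_of_two_le (lam : ℂ) {n : ℕ} (hn : 2 ≤ n) :
    coeff n (cremerLinearization lam) =
      (coeff n (cremerSeries lam) +
        compMiddleCoeff (cremerLinearization lam) (cremerSeries lam) n) / (lam - lam ^ n) := by
  rw [coeff_cremerSeries_of_two_le lam hn]
  exact (coeff_mk _ _).trans (congrArg Prod.snd (cremerCoeffs_of_two_le lam hn))

theorem norm_coeff_cremerSeries_of_two_le (lam : ℂ) {n : ℕ} (hn : 2 ≤ n) :
    ‖coeff n (cremerSeries lam)‖ = 1 := by
  rw [coeff_cremerSeries_of_two_le lam hn, norm_cremerChoice]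

theorem eq_cremerLinearization {lam : ℂ} (hlam0 : lam ≠ 0) (hfin : ¬IsOfFinOrder lam)
    {h : ℂ⟦X⟧} (hh0 : constantCoeff h = 0) (hh1 : coeff 1 h = 1)
    (heq : compPS h (cremerSeries lam) = lam • h) : h = cremerLinearization lam := by
  ext n
  induction n using Nat.strong_induction_on with
  | _ n ih =>
  obtain hn | hn := lt_or_ge n 2
  · interval_cases n
    · rw [coeff_zero_eq_constantCoeff_apply, hh0, cremerLinearization, coeff_mk,
        cremerCoeffs_zero]
    · rw [hh1, cremerLinearization, coeff_mk, cremerCoeffs, if_neg one_ne_zero, if_pos rfl]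
  rw [coeff_cremerLinearization_of_two_le lam hn,
    eq_div_iff (sub_pow_ne_zero_of_not_isOfFinOrder hlam0 hfin hn), mul_comm,
    linearization_coeff_eq (constantCoeff_cremerSeries lam) (coeff_one_cremerSeries lam) hh0 hh1
      heq hn,
    compMiddleCoeff_congr (constantCoeff_cremerSeries lam) (constantCoeff_cremerSeries lam) ih
      fun _ _ => rfl]

theorem one_le_norm_pow_sub_one_mul_norm_coeff_cremerLinearization {lam : ℂ} (hnorm : ‖lam‖ = 1)
    (hfin : ¬IsOfFinOrder lam) {q : ℕ} (hq : q ≠ 0) :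
    1 ≤ ‖lam ^ q - 1‖ * ‖coeff (q + 1) (cremerLinearization lam)‖ := by
  have hlam0 : lam ≠ 0 := norm_ne_zero_iff.1 (hnorm ▸ one_ne_zero)
  have hden : ‖lam - lam ^ (q + 1)‖ = ‖lam ^ q - 1‖ := by
    rw [pow_succ', ← mul_one_sub, norm_mul, hnorm, one_mul, norm_sub_rev]
  have hden0 : ‖lam - lam ^ (q + 1)‖ ≠ 0 :=
    norm_ne_zero_iff.2 (sub_pow_ne_zero_of_not_isOfFinOrder hlam0 hfin (by omega))
  rw [coeff_cremerLinearization_of_two_le lam (by omega),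
    coeff_cremerSeries_of_two_le lam (by omega), norm_div, ← hden, mul_div_cancel₀ _ hden0]
  exact one_le_norm_cremerChoice_add _

/-- Cremer's divergence construction: if `λ = e^{2πiα}`, `α` irrational, and
`liminf_q |λ^q - 1|^{1/q} = 0`, then there is a formal series
`f = λ z + Σ_{n≥2} a_n z^n` with all `|a_n| ≤ 1` whose formal linearization `h`
satisfies `limsup |h_n|^{1/n} = ∞`, i.e. has radius of convergence 0. -/
theorem cremer_divergent_linearization (α : ℝ) (hα : Irrational α)
    (lam : ℂ) (hlam : lam = Complex.exp (2 * Real.pi * Complex.I * α))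
    (hliouville : ∀ ε : ℝ, 0 < ε →
      ∃ᶠ q : ℕ in atTop, ‖lam ^ q - 1‖ ^ ((q : ℝ)⁻¹) < ε) :
    ∃ f : PowerSeries ℂ,
      PowerSeries.constantCoeff f = 0 ∧ PowerSeries.coeff 1 f = lam ∧
      (∀ n : ℕ, 2 ≤ n → ‖PowerSeries.coeff n f‖ ≤ 1) ∧
      ∀ h : PowerSeries ℂ,
        (PowerSeries.constantCoeff h = 0 ∧ PowerSeries.coeff 1 h = 1 ∧
          compPS h f = lam • h) →
        ∀ C : ℝ, ∃ᶠ n : ℕ in atTop, C < ‖PowerSeries.coeff n h‖ ^ ((n : ℝ)⁻¹) := by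
  have hnorm : ‖lam‖ = 1 := by
    rw [hlam, show 2 * Real.pi * Complex.I * α = ((2 * Real.pi * α : ℝ) : ℂ) * Complex.I by
      push_cast; ring]
    exact Complex.norm_exp_ofReal_mul_I _
  have hfin : ¬IsOfFinOrder lam := hlam ▸ not_isOfFinOrder_exp_of_irrational hα
  refine ⟨cremerSeries lam, constantCoeff_cremerSeries lam, coeff_one_cremerSeries lam,
    fun n hn => (norm_coeff_cremerSeries_of_two_le lam hn).le, ?_⟩
  rintro h ⟨hh0, hh1, heq⟩
  rw [eq_cremerLinearization (norm_ne_zero_iff.1 (hnorm ▸ one_ne_zero)) hfin hh0 hh1 heq]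
  exact frequently_lt_rpow_inv_of_one_le_mul (fun q => norm_nonneg _)
    (fun q hq => one_le_norm_pow_sub_one_mul_norm_coeff_cremerLinearization hnorm hfin hq)
    hliouville
end

section
/- Let λ ∈ ℂ with |λ| ≠ 1 and λ ≠ 0. Then every holomorphic germ f(z) = λz + O(z²) at 0 is holomorphically linearizable: there is a holomorphic function h on a neighborhood of 0 with h(0) = 0, h'(0) = 1, and h(f(z)) = λ h(z) on that neighborhood. -/
/-!
In the attracting case `0 < |λ| < 1`, write `f z = λ z + O(z²)` on a small ball and pick
`|λ| < μ < √|λ|`. On a ball of small radius `f` contracts by the factor `μ`, so `|fⁿ z| ≤ μⁿ |z|`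
and the increments `fⁿ⁺¹ z / λⁿ⁺¹ - fⁿ z / λⁿ = (f w - λ w) / λⁿ⁺¹` (with `w = fⁿ z`) are
`O((μ² / |λ|)ⁿ |z|²)`. Since `μ² < |λ|` they sum uniformly, so the Koenigs function
`h z = lim fⁿ z / λⁿ` is holomorphic, satisfies `h ∘ f = λ h` by shifting the index, and
`h z - z = O(z²)`. In the repelling case `|λ| > 1` the local inverse of `f` is analytic with
multiplier `λ⁻¹`, and a linearization of it linearizes `f`.
-/

open Filter Metric Set Topology Function Asymptotics

theorem AnalyticAt.isBigO_sub_sub_smul_deriv {𝕜 E : Type*} [NontriviallyNormedField 𝕜]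
    [NormedAddCommGroup E] [NormedSpace 𝕜 E] {f : 𝕜 → E} (hf : AnalyticAt 𝕜 f 0) :
    (fun z => f z - f 0 - z • deriv f 0) =O[𝓝 0] fun z => z ^ 2 := by
  obtain ⟨p, hp⟩ := hf
  have hsum : ∀ z, p.partialSum 2 z = f 0 + z • deriv f 0 := fun z => by
    simp [FormalMultilinearSeries.partialSum, Finset.sum_range_succ,
      ← hp.coeff_zero (fun _ => z), hp.deriv]
  have := hp.isBigO_sub_partialSum_pow 2
  simp only [zero_add, hsum, ← sub_sub] at this
  exact this.trans <|
    (isBigO_refl (fun z : 𝕜 => z ^ 2) _).norm_left.congr_left fun z => norm_pow z 2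

noncomputable def koenigsTerm (f : ℂ → ℂ) (lam : ℂ) (n : ℕ) (z : ℂ) : ℂ :=
  f^[n + 1] z / lam ^ (n + 1) - f^[n] z / lam ^ n

/-- The partial sums telescope: `z + ∑ n < N, koenigsTerm f lam n z = f^[N] z / lam ^ N`. -/
noncomputable def koenigsFunction (f : ℂ → ℂ) (lam z : ℂ) : ℂ :=
  z + ∑' n, koenigsTerm f lam n z

section FunctionalEquation

variable {f : ℂ → ℂ} {lam : ℂ}

theorem koenigsTerm_eq_div (hlam : lam ≠ 0) (n : ℕ) (z : ℂ) :
    koenigsTerm f lam n z = (f (f^[n] z) - lam * f^[n] z) / lam ^ (n + 1) := by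
  rw [koenigsTerm, iterate_succ_apply']
  field_simp
  ring

theorem koenigsTerm_map_apply (hlam : lam ≠ 0) (n : ℕ) (z : ℂ) :
    koenigsTerm f lam n (f z) = lam * koenigsTerm f lam (n + 1) z := by
  simp only [koenigsTerm, ← iterate_succ_apply]
  field_simp
  ring

theorem koenigsFunction_map_apply (hlam : lam ≠ 0) {z : ℂ}
    (hz : Summable (koenigsTerm f lam · z)) :
    koenigsFunction f lam (f z) = lam * koenigsFunction f lam z := by
  rw [koenigsFunction, koenigsFunction, hz.tsum_eq_zero_add]
  simp only [koenigsTerm_map_apply hlam, tsum_mul_left]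
  simp only [koenigsTerm, zero_add, pow_one, iterate_one, iterate_zero_apply, pow_zero, div_one]
  field_simp
  ring

theorem koenigsFunction_zero (hf : f 0 = 0) : koenigsFunction f lam 0 = 0 := by
  simp [koenigsFunction, koenigsTerm, iterate_fixed hf]

end FunctionalEquation

section Contraction

variable {f : ℂ → ℂ} {lam : ℂ} {r C μ : ℝ}

theorem norm_le_of_norm_sub_mul_le
    (hquad : ∀ z ∈ ball (0 : ℂ) r, ‖f z - lam * z‖ ≤ C * ‖z‖ ^ 2)
    (hC : 0 ≤ C) (hμ : ‖lam‖ + C * r ≤ μ) {z : ℂ} (hz : z ∈ ball 0 r) : ‖f z‖ ≤ μ * ‖z‖ :=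
  have hzr : ‖z‖ < r := mem_ball_zero_iff.mp hz
  calc ‖f z‖ ≤ ‖lam * z‖ + ‖f z - lam * z‖ := norm_le_insert' _ _
    _ ≤ ‖lam‖ * ‖z‖ + C * ‖z‖ * ‖z‖ := by
      rw [norm_mul, mul_assoc, ← sq]
      gcongr
      exact hquad z hz
    _ ≤ (‖lam‖ + C * r) * ‖z‖ := by rw [add_mul]; gcongr
    _ ≤ μ * ‖z‖ := by gcongr

variable (hcontr : ∀ z ∈ ball (0 : ℂ) r, ‖f z‖ ≤ μ * ‖z‖) (hμ0 : 0 ≤ μ) (hμ1 : μ ≤ 1)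
include hcontr hμ1

theorem mapsTo_ball_of_norm_le_mul : MapsTo f (ball 0 r) (ball 0 r) := fun z hz => by
  rw [mem_ball_zero_iff] at hz ⊢
  calc ‖f z‖ ≤ μ * ‖z‖ := hcontr z (mem_ball_zero_iff.mpr hz)
    _ ≤ 1 * ‖z‖ := by gcongr
    _ < r := by rwa [one_mul]

include hμ0

theorem norm_iterate_le_of_norm_le_mul {z : ℂ} (hz : z ∈ ball 0 r) (n : ℕ) :
    ‖f^[n] z‖ ≤ μ ^ n * ‖z‖ := by
  induction n with
  | zero => simp
  | succ n ih =>
    rw [iterate_succ_apply', pow_succ', mul_assoc]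
    calc ‖f (f^[n] z)‖ ≤ μ * ‖f^[n] z‖ :=
          hcontr _ ((mapsTo_ball_of_norm_le_mul hcontr hμ1).iterate n hz)
      _ ≤ μ * (μ ^ n * ‖z‖) := by gcongr

end Contraction

section KoenigsFunction

variable {f : ℂ → ℂ} {lam : ℂ} {r C μ : ℝ}

theorem hasSum_geometric_sq_div_norm (hμlam : μ ^ 2 < ‖lam‖) :
    HasSum (fun n => (μ ^ 2 / ‖lam‖) ^ n) (1 - μ ^ 2 / ‖lam‖)⁻¹ :=
  hasSum_geometric_of_lt_one (by positivity)
    ((div_lt_one ((sq_nonneg μ).trans_lt hμlam)).mpr hμlam)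

variable (hquad : ∀ z ∈ ball (0 : ℂ) r, ‖f z - lam * z‖ ≤ C * ‖z‖ ^ 2) (hC : 0 ≤ C)
  (hcontr : ∀ z ∈ ball (0 : ℂ) r, ‖f z‖ ≤ μ * ‖z‖) (hμ0 : 0 ≤ μ) (hμ1 : μ ≤ 1)
  (hμlam : μ ^ 2 < ‖lam‖)
include hquad hC hcontr hμ0 hμ1 hμlam

theorem norm_koenigsTerm_le {z : ℂ} (hz : z ∈ ball 0 r) (n : ℕ) :
    ‖koenigsTerm f lam n z‖ ≤ C / ‖lam‖ * ‖z‖ ^ 2 * (μ ^ 2 / ‖lam‖) ^ n := by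
  have hlam : lam ≠ 0 := norm_pos_iff.mp ((sq_nonneg μ).trans_lt hμlam)
  have hw := (mapsTo_ball_of_norm_le_mul hcontr hμ1).iterate n hz
  have hiter := norm_iterate_le_of_norm_le_mul hcontr hμ0 hμ1 hz n
  rw [koenigsTerm_eq_div hlam, norm_div, norm_pow]
  calc ‖f (f^[n] z) - lam * f^[n] z‖ / ‖lam‖ ^ (n + 1)
      ≤ C * (μ ^ n * ‖z‖) ^ 2 / ‖lam‖ ^ (n + 1) := by
        gcongr
        exact (hquad _ hw).trans (by gcongr)
    _ = C / ‖lam‖ * ‖z‖ ^ 2 * (μ ^ 2 / ‖lam‖) ^ n := by ring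

theorem summable_koenigsTerm {z : ℂ} (hz : z ∈ ball 0 r) : Summable (koenigsTerm f lam · z) :=
  .of_norm_bounded ((hasSum_geometric_sq_div_norm hμlam).mul_left _).summable
    (norm_koenigsTerm_le hquad hC hcontr hμ0 hμ1 hμlam hz)

theorem norm_koenigsFunction_sub_le {z : ℂ} (hz : z ∈ ball 0 r) :
    ‖koenigsFunction f lam z - z‖ ≤ C / ‖lam‖ * ‖z‖ ^ 2 * (1 - μ ^ 2 / ‖lam‖)⁻¹ := by
  rw [koenigsFunction, add_sub_cancel_left]
  exact tsum_of_norm_bounded ((hasSum_geometric_sq_div_norm hμlam).mul_left _)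
    (norm_koenigsTerm_le hquad hC hcontr hμ0 hμ1 hμlam hz)

theorem differentiableOn_koenigsFunction (hf : DifferentiableOn ℂ f (ball 0 r)) :
    DifferentiableOn ℂ (koenigsFunction f lam) (ball 0 r) := by
  have hmaps := mapsTo_ball_of_norm_le_mul hcontr hμ1
  refine differentiableOn_id.add (Complex.differentiableOn_tsum_of_summable_norm
    ((hasSum_geometric_sq_div_norm hμlam).mul_left (C / ‖lam‖ * r ^ 2)).summable (fun n => ?_)
    isOpen_ball fun n z hz => ?_)
  · exact ((hf.iterate hmaps _).div_const _).sub ((hf.iterate hmaps _).div_const _)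
  · refine (norm_koenigsTerm_le hquad hC hcontr hμ0 hμ1 hμlam hz n).trans ?_
    have := (mem_ball_zero_iff.mp hz).le
    gcongr

theorem hasDerivAt_koenigsFunction (hr : 0 < r) : HasDerivAt (koenigsFunction f lam) 1 0 := by
  have hf0 : f 0 = 0 := by simpa using hcontr 0 (mem_ball_self hr)
  have hO : (fun z => koenigsFunction f lam z - z) =O[𝓝 0] fun z => z ^ 2 := by
    refine IsBigO.of_bound (C / ‖lam‖ * (1 - μ ^ 2 / ‖lam‖)⁻¹) ?_
    filter_upwards [ball_mem_nhds 0 hr] with z hz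
    rw [norm_pow, mul_right_comm]
    exact norm_koenigsFunction_sub_le hquad hC hcontr hμ0 hμ1 hμlam hz
  rw [hasDerivAt_iff_isLittleO, koenigsFunction_zero hf0]
  simpa using hO.trans_isLittleO (isLittleO_pow_id one_lt_two)

end KoenigsFunction

theorem exists_gt_lt_one_sq_lt {L : ℝ} (hL0 : 0 < L) (hL1 : L < 1) :
    ∃ μ, L < μ ∧ μ < 1 ∧ μ ^ 2 < L := by
  have hsqrt : L < √L := (Real.lt_sqrt hL0.le).mpr (by nlinarith)
  obtain ⟨μ, hLμ, hμ⟩ := exists_between hsqrt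
  exact ⟨μ, hLμ, hμ.trans ((Real.sqrt_lt' one_pos).mpr (by simpa using hL1)),
    (Real.lt_sqrt (hL0.trans hLμ).le).mp hμ⟩

theorem exists_linearization_of_norm_lt_one {lam : ℂ} (hlam0 : lam ≠ 0) (hlam1 : ‖lam‖ < 1)
    {f : ℂ → ℂ} (hf : AnalyticAt ℂ f 0) (hf0 : f 0 = 0) (hf1 : deriv f 0 = lam) :
    ∃ h : ℂ → ℂ, AnalyticAt ℂ h 0 ∧ h 0 = 0 ∧ deriv h 0 = 1 ∧
      ∀ᶠ z in 𝓝 0, h (f z) = lam * h z := by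
  obtain ⟨μ, hlamμ, hμ1, hμlam⟩ := exists_gt_lt_one_sq_lt (norm_pos_iff.mpr hlam0) hlam1
  obtain ⟨C, hC, hCO⟩ := hf.isBigO_sub_sub_smul_deriv.exists_pos
  obtain ⟨ε, hε, hball⟩ :=
    Metric.eventually_nhds_iff_ball.mp (hCO.bound.and hf.eventually_analyticAt)
  set r := min ε ((μ - ‖lam‖) / C)
  have hr : 0 < r := lt_min hε (div_pos (by linarith) hC)
  have hrε : ball (0 : ℂ) r ⊆ ball 0 ε := ball_subset_ball (min_le_left _ _)
  have hquad : ∀ z ∈ ball (0 : ℂ) r, ‖f z - lam * z‖ ≤ C * ‖z‖ ^ 2 := fun z hz => by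
    simpa [hf0, hf1, mul_comm] using (hball z (hrε hz)).1
  have hfd : DifferentiableOn ℂ f (ball 0 r) := fun z hz =>
    (hball z (hrε hz)).2.differentiableAt.differentiableWithinAt
  have hμ : ‖lam‖ + C * r ≤ μ := by
    linarith [(le_div_iff₀' hC).mp (min_le_right ε ((μ - ‖lam‖) / C))]
  have hcontr := fun z => norm_le_of_norm_sub_mul_le (z := z) hquad hC.le hμ
  have hμ0 : 0 ≤ μ := (norm_nonneg lam).trans hlamμ.le
  refine ⟨koenigsFunction f lam,
    (differentiableOn_koenigsFunction hquad hC.le hcontr hμ0 hμ1.le hμlam hfd).analyticAt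
      (ball_mem_nhds 0 hr),
    koenigsFunction_zero hf0,
    (hasDerivAt_koenigsFunction hquad hC.le hcontr hμ0 hμ1.le hμlam hr).deriv, ?_⟩
  filter_upwards [ball_mem_nhds 0 hr] with z hz
  exact koenigsFunction_map_apply hlam0
    (summable_koenigsTerm hquad hC.le hcontr hμ0 hμ1.le hμlam hz)

theorem exists_linearization_of_one_lt_norm {lam : ℂ} (hlam1 : 1 < ‖lam‖)
    {f : ℂ → ℂ} (hf : AnalyticAt ℂ f 0) (hf0 : f 0 = 0) (hf1 : deriv f 0 = lam) :
    ∃ h : ℂ → ℂ, AnalyticAt ℂ h 0 ∧ h 0 = 0 ∧ deriv h 0 = 1 ∧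
      ∀ᶠ z in 𝓝 0, h (f z) = lam * h z := by
  have hlam0 : deriv f 0 ≠ 0 := hf1 ▸ norm_pos_iff.mp (one_pos.trans hlam1)
  have hsd := hf.hasStrictDerivAt
  set g := hsd.localInverse f (deriv f 0) 0 hlam0
  have hleft : ∀ᶠ z in 𝓝 0, g (f z) = z := hsd.eventually_left_inverse hlam0
  have hg : AnalyticAt ℂ g 0 := hf0 ▸ hf.analyticAt_localInverse hlam0
  have hg0 : g 0 = 0 := by simpa [hf0] using hleft.self_of_nhds
  have hg1 : deriv g 0 = lam⁻¹ := by
    simpa [hf0, hf1] using (hsd.to_localInverse hlam0).hasDerivAt.deriv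
  obtain ⟨h, hh, hh0, hh1, hconj⟩ :=
    exists_linearization_of_norm_lt_one (inv_ne_zero (hf1 ▸ hlam0))
      (by rwa [norm_inv, inv_lt_one₀ (one_pos.trans hlam1)]) hg hg0 hg1
  refine ⟨h, hh, hh0, hh1, ?_⟩
  have hf_tendsto : Tendsto f (𝓝 0) (𝓝 0) := by simpa [hf0] using hf.continuousAt.tendsto
  filter_upwards [hleft, hf_tendsto.eventually hconj] with z hgf hhg
  rw [hgf] at hhg
  rw [hhg, ← hf1, mul_inv_cancel_left₀ hlam0]

/-- Koenigs' theorem: a holomorphic germ `f(z) = λ z + O(z²)` with `λ ≠ 0`,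
`|λ| ≠ 1` is holomorphically linearizable: there is `h` holomorphic near `0`
with `h(0) = 0`, `h'(0) = 1` and `h ∘ f = λ h` near `0`. -/
theorem koenigs_linearization (lam : ℂ) (hlam0 : lam ≠ 0) (hlam1 : ‖lam‖ ≠ 1)
    (f : ℂ → ℂ) (hf : AnalyticAt ℂ f 0) (hf0 : f 0 = 0) (hf1 : deriv f 0 = lam) :
    ∃ h : ℂ → ℂ, AnalyticAt ℂ h 0 ∧ h 0 = 0 ∧ deriv h 0 = 1 ∧
      ∀ᶠ z in nhds (0 : ℂ), h (f z) = lam * h z := by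
  rcases hlam1.lt_or_gt with hlt | hgt
  · exact exists_linearization_of_norm_lt_one hlam0 hlt hf hf0 hf1
  · exact exists_linearization_of_one_lt_norm hgt hf hf0 hf1
end

section
/- Let f_t(z) = λz + Σ_{i=0}^{d} t^i f_i(z) with λ non-resonant and each f_i a formal power series of order ≥ 2. Then the coefficient h_n of z^n in the unique formal linearization h_t is a polynomial in t with deg_t h_n ≤ d·(n−1). -/
open PowerSeries

/-- The family `f_t` viewed as a power series with polynomial coefficients. -/
noncomputable def FFaux (lam : ℂ) (d : ℕ) (f : ℕ → PowerSeries ℂ) : PowerSeries (Polynomial ℂ) :=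
  PowerSeries.C (Polynomial.C lam) * PowerSeries.X +
    ∑ i ∈ Finset.range (d + 1),
      PowerSeries.C (Polynomial.X ^ i) * PowerSeries.map (Polynomial.C) (f i)

lemma coeff_FFaux (lam : ℂ) (d : ℕ) (f : ℕ → PowerSeries ℂ) (n : ℕ) :
    PowerSeries.coeff n (FFaux lam d f) =
      (if n = 1 then Polynomial.C lam else 0) +
        ∑ i ∈ Finset.range (d + 1),
          Polynomial.X ^ i * Polynomial.C (PowerSeries.coeff n (f i)) := by
  simp only [FFaux, map_add, map_sum, PowerSeries.coeff_C_mul, PowerSeries.coeff_X,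
    PowerSeries.coeff_map, mul_ite, mul_one, mul_zero]

lemma map_FFaux (lam : ℂ) (d : ℕ) (f : ℕ → PowerSeries ℂ) (t : ℂ) :
    PowerSeries.map (Polynomial.evalRingHom t) (FFaux lam d f) =
      lam • PowerSeries.X + ∑ i ∈ Finset.range (d + 1), t ^ i • f i := by
  ext n
  rw [PowerSeries.coeff_map, coeff_FFaux]
  simp only [map_add, map_sum, Polynomial.eval_add, Polynomial.eval_mul, Polynomial.eval_pow,
    Polynomial.eval_X, Polynomial.eval_C, Polynomial.coe_evalRingHom, Polynomial.eval_finset_sum]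
  rw [PowerSeries.smul_eq_C_mul, PowerSeries.coeff_C_mul]
  congr 1
  by_cases hn1 : n = 1 <;> simp [hn1, PowerSeries.coeff_X]

/-- Recursively defined polynomials giving the coefficients of the linearization. -/
noncomputable def Hpoly (lam : ℂ) (c : ℕ → ℕ → Polynomial ℂ) : ℕ → Polynomial ℂ
  | 0 => 0
  | 1 => 1
  | (n+2) => Polynomial.C (lam - lam ^ (n+2))⁻¹ *
      ∑ k ∈ (Finset.range (n+2)).attach, Hpoly lam c k.1 * c (n+2) k.1
  decreasing_by exact Finset.mem_range.mp k.2

-- coefficient facts about FFaux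
section

variable (lam : ℂ) (d : ℕ) (f : ℕ → PowerSeries ℂ)
variable (hf0 : ∀ i : ℕ, i ≤ d → PowerSeries.constantCoeff (f i) = 0)
variable (hf1 : ∀ i : ℕ, i ≤ d → PowerSeries.coeff 1 (f i) = 0)

include hf0 in
lemma coeff_FFaux_zero : PowerSeries.coeff 0 (FFaux lam d f) = 0 := by
  rw [coeff_FFaux]
  have : ∀ i ∈ Finset.range (d + 1),
      Polynomial.X ^ i * Polynomial.C (PowerSeries.coeff 0 (f i)) = 0 := by
    intro i hi
    rw [PowerSeries.coeff_zero_eq_constantCoeff, hf0 i (Nat.lt_succ_iff.mp (Finset.mem_range.mp hi))]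
    simp
  rw [Finset.sum_congr rfl this]
  simp

include hf1 in
lemma coeff_FFaux_one : PowerSeries.coeff 1 (FFaux lam d f) = Polynomial.C lam := by
  rw [coeff_FFaux]
  have : ∀ i ∈ Finset.range (d + 1),
      Polynomial.X ^ i * Polynomial.C (PowerSeries.coeff 1 (f i)) = 0 := by
    intro i hi
    rw [hf1 i (Nat.lt_succ_iff.mp (Finset.mem_range.mp hi))]
    simp
  rw [Finset.sum_congr rfl this]
  simp

lemma natDegree_coeff_FFaux (n : ℕ) : (PowerSeries.coeff n (FFaux lam d f)).natDegree ≤ d := by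
  rw [coeff_FFaux]
  refine (Polynomial.natDegree_add_le _ _).trans ?_
  refine max_le ?_ ?_
  · split <;> simp
  · refine Polynomial.natDegree_sum_le_of_forall_le _ _ fun i hi => ?_
    refine (Polynomial.natDegree_mul_le).trans ?_
    simp only [Polynomial.natDegree_C, add_zero]
    exact (Polynomial.natDegree_pow_le.trans (by
      simp [Polynomial.natDegree_X]
      exact Nat.lt_succ_iff.mp (Finset.mem_range.mp hi)))

include hf0 hf1 in
lemma FFaux_pow (k : ℕ) : ∀ n : ℕ,
    (n < k → PowerSeries.coeff n ((FFaux lam d f) ^ k) = 0) ∧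
    (n = k → PowerSeries.coeff n ((FFaux lam d f) ^ k) = Polynomial.C lam ^ k) ∧
    (PowerSeries.coeff n ((FFaux lam d f) ^ k)).natDegree ≤ d * (n - k) := by
  induction k with
  | zero =>
    intro n
    refine ⟨fun hn => by omega, fun hn => ?_, ?_⟩
    · subst hn; simp
    · rcases Nat.eq_zero_or_pos n with h0 | h0
      · subst h0; simp
      · rw [pow_zero, PowerSeries.coeff_one, if_neg (by omega)]; simp
  | succ k ih =>
    intro n
    have hmul : PowerSeries.coeff n ((FFaux lam d f) ^ (k + 1)) =
        ∑ p ∈ Finset.HasAntidiagonal.antidiagonal n,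
          PowerSeries.coeff p.1 ((FFaux lam d f) ^ k) *
            PowerSeries.coeff p.2 (FFaux lam d f) := by
      rw [pow_succ, PowerSeries.coeff_mul]
    -- vanishing of the generic term
    have hterm0 : ∀ p ∈ Finset.HasAntidiagonal.antidiagonal n, p.1 < k ∨ p.2 = 0 →
        PowerSeries.coeff p.1 ((FFaux lam d f) ^ k) *
          PowerSeries.coeff p.2 (FFaux lam d f) = 0 := by
      rintro p _ (hp | hp)
      · rw [(ih p.1).1 hp, zero_mul]
      · rw [hp, coeff_FFaux_zero lam d f hf0, mul_zero]
    refine ⟨fun hn => ?_, fun hn => ?_, ?_⟩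
    · rw [hmul]
      refine Finset.sum_eq_zero fun p hp => ?_
      have hpn := Finset.HasAntidiagonal.mem_antidiagonal.mp hp
      exact hterm0 p hp (by omega)
    · subst hn
      rw [hmul]
      rw [Finset.sum_eq_single (k, 1)]
      · rw [(ih k).2.1 rfl, coeff_FFaux_one lam d f hf1, pow_succ]
      · intro p hp hne
        have hpn := Finset.HasAntidiagonal.mem_antidiagonal.mp hp
        refine hterm0 p hp ?_
        by_contra hc
        push_neg at hc
        apply hne
        have : p.1 = k ∧ p.2 = 1 := by omega
        exact Prod.ext this.1 this.2
      · intro hcn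
        exact absurd (by simp : (k, 1) ∈ Finset.HasAntidiagonal.antidiagonal (k + 1)) hcn
    · rw [hmul]
      refine Polynomial.natDegree_sum_le_of_forall_le _ _ fun p hp => ?_
      have hpn := Finset.HasAntidiagonal.mem_antidiagonal.mp hp
      rcases Classical.em (p.1 < k ∨ p.2 = 0) with hc | hc
      · rw [hterm0 p hp hc]; simp
      · push_neg at hc
        obtain ⟨h1, h2⟩ := hc
        refine Polynomial.natDegree_mul_le.trans ?_
        rcases Nat.eq_or_lt_of_le (Nat.one_le_iff_ne_zero.mpr h2) with h21 | h22
        · rw [← h21, coeff_FFaux_one lam d f hf1]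
          simp only [Polynomial.natDegree_C, add_zero]
          refine ((ih p.1).2.2).trans ?_
          exact Nat.mul_le_mul_left d (by omega)
        · have := (ih p.1).2.2
          have hF := natDegree_coeff_FFaux lam d f p.2
          calc (PowerSeries.coeff p.1 ((FFaux lam d f) ^ k)).natDegree +
                (PowerSeries.coeff p.2 (FFaux lam d f)).natDegree
              ≤ d * (p.1 - k) + d := add_le_add this hF
            _ = d * (p.1 - k + 1) := by ring
            _ ≤ d * (n - (k + 1)) := Nat.mul_le_mul_left d (by omega)

end

/-- For the polynomial family `f_t = λ z + Σ_{i=0}^d tⁱ f_i(z)` with `λ`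
non-resonant and each `f_i = O(z²)`, the `n`-th coefficient of the formal
linearization `h_t` is a polynomial in `t` of degree at most `d·(n-1)`. -/
theorem polynomial_family_linearization_coeff_degree
    (lam : ℂ) (hlam0 : lam ≠ 0) (hres : ∀ m : ℕ, 1 ≤ m → lam ^ m ≠ 1)
    (d : ℕ) (f : ℕ → PowerSeries ℂ)
    (hf0 : ∀ i : ℕ, i ≤ d → PowerSeries.constantCoeff (f i) = 0)
    (hf1 : ∀ i : ℕ, i ≤ d → PowerSeries.coeff 1 (f i) = 0)
    (h : ℂ → PowerSeries ℂ)
    (hh : ∀ t : ℂ,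
      PowerSeries.constantCoeff (h t) = 0 ∧ PowerSeries.coeff 1 (h t) = 1 ∧
        compPS (h t)
          (lam • PowerSeries.X + ∑ i ∈ Finset.range (d + 1), t ^ i • f i)
          = lam • h t) :
    ∀ n : ℕ, ∃ P : Polynomial ℂ, P.natDegree ≤ d * (n - 1) ∧
      ∀ t : ℂ, Polynomial.eval t P = PowerSeries.coeff n (h t) := by
  set c : ℕ → ℕ → Polynomial ℂ := fun n k => PowerSeries.coeff n ((FFaux lam d f) ^ k) with hc
  set H : ℕ → Polynomial ℂ := Hpoly lam c with hH
  -- evaluation of c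
  have hceval : ∀ (t : ℂ) (n k : ℕ),
      Polynomial.eval t (c n k) =
        PowerSeries.coeff n ((lam • PowerSeries.X +
          ∑ i ∈ Finset.range (d + 1), t ^ i • f i) ^ k) := by
    intro t n k
    rw [← map_FFaux lam d f t, ← map_pow, PowerSeries.coeff_map]
    rfl
  have key : ∀ n : ℕ, (H n).natDegree ≤ d * (n - 1) ∧
      ∀ t : ℂ, Polynomial.eval t (H n) = PowerSeries.coeff n (h t) := by
    intro n
    induction n using Nat.strong_induction_on with
    | _ n ih =>
      match n with
      | 0 =>
        refine ⟨by simp [hH, Hpoly], fun t => ?_⟩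
        have h0 := (hh t).1
        rw [← PowerSeries.coeff_zero_eq_constantCoeff_apply] at h0
        rw [h0]
        simp [hH, Hpoly]
      | 1 =>
        refine ⟨by simp [hH, Hpoly], fun t => ?_⟩
        rw [(hh t).2.1]
        simp [hH, Hpoly]
      | (m+2) =>
        set n := m + 2 with hn
        have hHn : H n = Polynomial.C (lam - lam ^ n)⁻¹ *
            ∑ k ∈ (Finset.range n).attach, H k.1 * c n k.1 := by
          rw [hH, Hpoly]
        have hne : lam - lam ^ n ≠ 0 := by
          have h1 : lam ^ (n - 1) ≠ 1 := hres (n - 1) (by omega)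
          have hfac : lam - lam ^ n = lam * (1 - lam ^ (n - 1)) := by
            rw [mul_sub, mul_one, ← pow_succ']
            congr 2
          rw [hfac]
          exact mul_ne_zero hlam0 (sub_ne_zero.mpr fun hceq => h1 hceq.symm)
        -- the functional equation at level n
        have heq : ∀ t : ℂ, ∑ k ∈ Finset.range n,
            PowerSeries.coeff k (h t) * Polynomial.eval t (c n k)
              = (lam - lam ^ n) * PowerSeries.coeff n (h t) := by
          intro t
          have hmain := congrArg (PowerSeries.coeff n) (hh t).2.2
          rw [compPS, PowerSeries.coeff_mk] at hmain
          have hR : (PowerSeries.coeff n) (lam • h t) =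
              lam * (PowerSeries.coeff n) (h t) := by
            rw [PowerSeries.smul_eq_C_mul, PowerSeries.coeff_C_mul]
          rw [hR] at hmain
          have hsum : ∑ k ∈ Finset.range (n + 1),
              PowerSeries.coeff k (h t) * Polynomial.eval t (c n k)
                = lam * PowerSeries.coeff n (h t) := by
            rw [← hmain]
            exact Finset.sum_congr rfl fun k _ => by rw [hceval]
          rw [Finset.sum_range_succ] at hsum
          have hcnn : Polynomial.eval t (c n n) = lam ^ n := by
            show Polynomial.eval t (PowerSeries.coeff n ((FFaux lam d f) ^ n)) = lam ^ n
            rw [(FFaux_pow lam d f hf0 hf1 n n).2.1 rfl]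
            simp
          rw [hcnn] at hsum
          linear_combination hsum
        refine ⟨?_, ?_⟩
        · rw [hHn]
          refine Polynomial.natDegree_mul_le.trans ?_
          simp only [Polynomial.natDegree_C, zero_add]
          refine Polynomial.natDegree_sum_le_of_forall_le _ _ fun k _ => ?_
          obtain ⟨k, hk⟩ := k
          have hk' := Finset.mem_range.mp hk
          simp only
          rcases Nat.eq_zero_or_pos k with h0 | h0
          · subst h0
            have : H 0 = 0 := by rw [hH, Hpoly]
            rw [this, zero_mul]
            simp
          · refine Polynomial.natDegree_mul_le.trans ?_
            have h1 := (ih k hk').1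
            have h2 : (c n k).natDegree ≤ d * (n - k) := (FFaux_pow lam d f hf0 hf1 k n).2.2
            calc (H k).natDegree + (c n k).natDegree ≤ d * (k - 1) + d * (n - k) :=
                  add_le_add h1 h2
              _ = d * ((k - 1) + (n - k)) := by ring
              _ ≤ d * (n - 1) := Nat.mul_le_mul_left d (by omega)
        · intro t
          rw [hHn]
          rw [Polynomial.eval_mul, Polynomial.eval_C, Polynomial.eval_finset_sum]
          have : ∑ k ∈ (Finset.range n).attach,
              Polynomial.eval t (H k.1 * c n k.1) =
              ∑ k ∈ Finset.range n,
                PowerSeries.coeff k (h t) * Polynomial.eval t (c n k) := by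
            rw [← Finset.sum_attach (Finset.range n)
              (fun k => PowerSeries.coeff k (h t) * Polynomial.eval t (c n k))]
            refine Finset.sum_congr rfl fun k _ => ?_
            obtain ⟨k, hk⟩ := k
            simp only
            rw [Polynomial.eval_mul, (ih k (Finset.mem_range.mp hk)).2 t]
          rw [this, heq t, ← mul_assoc, inv_mul_cancel₀ hne, one_mul]
  intro n
  exact ⟨H n, (key n).1, (key n).2⟩
end

section
/- Let A ∈ GL_n(ℂ) be diagonalizable with non-resonant eigenvalues λ₁,…,λ_n (λ_j ≠ λ₁^{i₁}⋯λ_n^{i_n} for all multi-indices i with |i| ≥ 2). Then every formal map f: (ℂ^n,0) → (ℂ^n,0) with linear part A admits a unique formal linearization h with h(0)=0, D₀h = I, and h∘f = A∘h. -/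
/-!
Split `h` into homogeneous parts. Since `f = A x + O(x²)`, the degree-`N` part of `h_j ∘ f` is
`(h_N)_j ∘ A` plus terms involving only the parts `h_M` with `M < N`. Hence the conjugacy equation
in degree `N` reads `L_N h_N = (terms of lower degree)`, where `L_N h = h ∘ A - A h` is the
homological operator on `n`-tuples of homogeneous polynomials of degree `N`. Conjugating `A` to
`diag λ`, the operator `L_N` becomes diagonal in the basis `x^m e_j` with eigenvalues
`λ^m - λ_j`, which do not vanish for `N ≥ 2` by non-resonance. The normalization fixes the degrees
`0` and `1`, and each higher degree is then determined by the lower ones, so a recursion on the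
degree gives existence and uniqueness at once.
-/

/-- Composition of multivariate formal power series: `mvComp g f` substitutes the
formal map `f` into `g`; correct when each `f k` has zero constant term. -/
noncomputable def mvComp {n : ℕ} (g : MvPowerSeries (Fin n) ℂ)
    (f : Fin n → MvPowerSeries (Fin n) ℂ) : MvPowerSeries (Fin n) ℂ :=
  fun d => ∑ m ∈ Finset.Iic (Finsupp.equivFunOnFinite.symm
      (fun _ => d.sum fun _ v => v) : Fin n →₀ ℕ),
    MvPowerSeries.coeff m g * MvPowerSeries.coeff d (∏ k : Fin n, f k ^ m k)

open Finset Matrix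

namespace FormalLinearization

theorem existsUnique_fixedPt_of_dependsOnLower {α β : Type*} [Inhabited β] (deg : α → ℕ)
    (G : (α → β) → α → β) (hG : ∀ c c' a, (∀ b, deg b < deg a → c b = c' b) → G c a = G c' a) :
    ∃! c : α → β, G c = c := by
  classical
  let c : α → β := (measure deg).wf.fix fun a rec =>
    G (fun b => if hb : deg b < deg a then rec b hb else default) a
  have hc : G c = c := funext fun a => by
    rw [show c a = _ from (measure deg).wf.fix_eq _ a]
    exact hG _ _ a fun b hb => by rw [dif_pos hb]
  refine ⟨c, hc, fun c' hc' => funext fun a => ?_⟩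
  induction a using (measure deg).wf.induction with
  | _ a ih => rw [← hc', ← hc]; exact hG _ _ a ih

theorem mulVec_eq_iff_eq_inv_mulVec {ι K : Type*} [Fintype ι] [DecidableEq ι] [CommRing K]
    {S : Matrix ι ι K} (hS : IsUnit S.det) {x b : ι → K} : S *ᵥ x = b ↔ x = S⁻¹ *ᵥ b := by
  constructor <;> rintro rfl
  · rw [mulVec_mulVec, nonsing_inv_mul _ hS, one_mulVec]
  · rw [mulVec_mulVec, mul_nonsing_inv _ hS, one_mulVec]

section Order

open MvPowerSeries

variable {σ R : Type*} [CommSemiring R]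

theorem homogeneousComponent_zero_one :
    homogeneousComponent 0 (1 : MvPowerSeries σ R) = 1 := by
  classical
  ext d
  simp only [coeff_homogeneousComponent, coeff_one, Finsupp.degree_eq_zero_iff]
  split_ifs <;> simp_all

theorem homogeneousComponent_prod_of_le_order {ι : Type*} (s : Finset ι)
    {f : ι → MvPowerSeries σ R} {p : ι → ℕ} (hf : ∀ i ∈ s, p i ≤ (f i).order) :
    homogeneousComponent (∑ i ∈ s, p i) (∏ i ∈ s, f i)
      = ∏ i ∈ s, homogeneousComponent (p i) (f i) := by
  classical
  induction s using Finset.induction_on with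
  | empty => exact homogeneousComponent_zero_one
  | insert a s ha ih =>
    rw [sum_insert ha, prod_insert ha, prod_insert ha,
      homogeneousComponent_mul_of_le_order (hf a (mem_insert_self a s)),
      ih fun i hi => hf i (mem_insert_of_mem hi)]
    calc ((∑ i ∈ s, p i : ℕ) : ℕ∞) = ∑ i ∈ s, (p i : ℕ∞) := Nat.cast_sum s p
      _ ≤ ∑ i ∈ s, (f i).order := sum_le_sum fun i hi => hf i (mem_insert_of_mem hi)
      _ ≤ _ := le_order_prod f s

theorem homogeneousComponent_pow_of_le_order {f : MvPowerSeries σ R} {p : ℕ}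
    (hf : p ≤ f.order) (m : ℕ) :
    homogeneousComponent (m * p) (f ^ m) = homogeneousComponent p f ^ m := by
  simpa using homogeneousComponent_prod_of_le_order (range m) (fun _ _ => hf)

variable {ι : Type*} [Fintype ι] {f : ι → MvPowerSeries σ R}

theorem le_order_prod_pow (hf : ∀ i, constantCoeff (f i) = 0) (m : ι →₀ ℕ) :
    (m.degree : ℕ∞) ≤ (∏ i, f i ^ m i).order := by
  calc (m.degree : ℕ∞) = ∑ i, ((m i : ℕ) : ℕ∞) := by rw [Finsupp.degree_eq_sum]; push_cast; rfl
    _ ≤ ∑ i, (f i ^ m i).order :=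
      sum_le_sum fun i _ => le_order_pow_of_constantCoeff_eq_zero _ (hf i)
    _ ≤ _ := le_order_prod _ _

theorem coeff_prod_pow_of_degree_lt (hf : ∀ i, constantCoeff (f i) = 0) {m : ι →₀ ℕ}
    {d : σ →₀ ℕ} (hd : d.degree < m.degree) : coeff d (∏ i, f i ^ m i) = 0 :=
  coeff_of_lt_order ((Nat.cast_lt.mpr hd).trans_le (le_order_prod_pow hf m))

theorem homogeneousComponent_prod_pow (hf : ∀ i, constantCoeff (f i) = 0) (m : ι →₀ ℕ) :
    homogeneousComponent m.degree (∏ i, f i ^ m i)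
      = ∏ i, homogeneousComponent 1 (f i) ^ m i := by
  have hf1 (i : ι) : (1 : ℕ∞) ≤ (f i).order := one_le_order_iff_constCoeff_eq_zero.mpr (hf i)
  rw [Finsupp.degree_eq_sum, homogeneousComponent_prod_of_le_order univ
    fun i _ => le_order_pow_of_constantCoeff_eq_zero (m i) (hf i)]
  refine prod_congr rfl fun i _ => ?_
  simpa using homogeneousComponent_pow_of_le_order (hf1 i) (m i)

end Order

section Exponents

variable {σ : Type*}

theorem degree_eq_one_iff {d : σ →₀ ℕ} : d.degree = 1 ↔ ∃ l, d = Finsupp.single l 1 := by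
  classical
  refine ⟨fun h => ?_, fun ⟨l, hl⟩ => hl ▸ Finsupp.degree_single l 1⟩
  obtain ⟨l, hl⟩ := Multiset.card_eq_one.mp ((Finsupp.card_toMultiset d).trans h)
  exact ⟨l, Multiset.toFinsupp.symm.injective (by simp [hl])⟩

variable (σ) in
abbrev ExponentsOfDegree (N : ℕ) : Type _ := {d : σ →₀ ℕ // d.degree = N}

theorem forall_exponentsOfDegree_iff {P : (N : ℕ) → ExponentsOfDegree σ N × σ → Prop} :
    (∀ N q, P N q) ↔ ∀ p : (σ →₀ ℕ) × σ, P p.1.degree (⟨p.1, rfl⟩, p.2) :=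
  ⟨fun h p => h _ _, fun h => by rintro N ⟨⟨d, rfl⟩, j⟩; exact h (d, j)⟩

variable [Fintype σ] [DecidableEq σ]

theorem mem_finsuppAntidiag_univ {N : ℕ} {d : σ →₀ ℕ} :
    d ∈ finsuppAntidiag univ N ↔ d.degree = N := by
  simp [Finsupp.degree_eq_sum]

noncomputable instance (N : ℕ) : Fintype (ExponentsOfDegree σ N) :=
  Fintype.subtype _ fun _ => mem_finsuppAntidiag_univ

theorem sum_exponentsOfDegree {M : Type*} [AddCommMonoid M] (N : ℕ) (g : (σ →₀ ℕ) → M) :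
    ∑ e : ExponentsOfDegree σ N, g e = ∑ e ∈ finsuppAntidiag univ N, g e :=
  (sum_subtype _ (fun _ => mem_finsuppAntidiag_univ) g).symm

variable (σ) in
/-- Exponents of degree `< N`, inside the box `{e | ∀ k, e k ≤ N}` indexing the sum in `mvComp`. -/
noncomputable def lowerExponents (N : ℕ) : Finset (σ →₀ ℕ) :=
  (Iic (Finsupp.equivFunOnFinite.symm fun _ => N)).filter (·.degree < N)

theorem sum_Iic_eq_sum_lowerExponents_add {M : Type*} [AddCommMonoid M] (N : ℕ)
    {F : (σ →₀ ℕ) → M} (hF : ∀ e, N < e.degree → F e = 0) :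
    ∑ e ∈ Iic (Finsupp.equivFunOnFinite.symm fun _ => N), F e
      = ∑ e ∈ lowerExponents σ N, F e + ∑ e : ExponentsOfDegree σ N, F e := by
  have mem_Iic {e : σ →₀ ℕ} (he : e.degree ≤ N) :
      e ∈ Iic (Finsupp.equivFunOnFinite.symm fun _ => N) :=
    mem_Iic.mpr fun k => (Finsupp.le_degree k e).trans he
  rw [← sum_filter_of_ne (p := (·.degree ≤ N)) fun e _ hne =>
      by_contra fun h => hne (hF e (by omega)),
    ← sum_filter_add_sum_filter_not _ (·.degree < N), filter_filter, filter_filter,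
    sum_exponentsOfDegree]
  congr 1 <;> refine sum_congr (ext fun e => ?_) fun _ _ => rfl
  · simp only [lowerExponents, mem_filter]
    exact ⟨fun h => ⟨h.1, h.2.2⟩, fun h => ⟨h.1, h.2.le, h.2⟩⟩
  · simp only [mem_filter, mem_finsuppAntidiag_univ]
    exact ⟨fun h => by omega, fun h => ⟨mem_Iic h.le, by omega⟩⟩

end Exponents

section LinearSubstitution

open MvPolynomial

variable {σ R : Type*} [Fintype σ] [CommSemiring R]

noncomputable def linearForm (A : Matrix σ σ R) (k : σ) : MvPolynomial σ R :=
  ∑ l, C (A k l) * X l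

noncomputable def substCoeff (A : Matrix σ σ R) (m d : σ →₀ ℕ) : R :=
  coeff d (∏ k, linearForm A k ^ m k)

theorem isHomogeneous_linearForm (A : Matrix σ σ R) (k : σ) :
    (linearForm A k).IsHomogeneous 1 :=
  IsHomogeneous.sum _ _ _ fun l _ => isHomogeneous_C_mul_X (A k l) l

theorem isHomogeneous_prod_linearForm_pow (A : Matrix σ σ R) (m : σ →₀ ℕ) :
    (∏ k, linearForm A k ^ m k).IsHomogeneous m.degree := by
  rw [Finsupp.degree_eq_sum]
  exact IsHomogeneous.prod _ _ _ fun k _ => by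
    simpa using (isHomogeneous_linearForm A k).pow (m k)

theorem aeval_linearForm (A B : Matrix σ σ R) (k : σ) :
    aeval (linearForm A) (linearForm B k) = linearForm (B * A) k := by
  simp only [linearForm, map_sum, map_mul, aeval_C, aeval_X, algebraMap_eq, mul_sum,
    mul_apply, sum_mul, mul_assoc]
  exact sum_comm

theorem prod_X_pow (m : σ →₀ ℕ) : ∏ k, (X k : MvPolynomial σ R) ^ m k = monomial m 1 := by
  rw [monomial_eq, C_1, one_mul, Finsupp.prod_fintype _ _ fun _ => pow_zero _]

variable [DecidableEq σ]

theorem coeff_single_linearForm (A : Matrix σ σ R) (k l : σ) :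
    coeff (Finsupp.single l 1) (linearForm A k) = A k l := by
  simp [linearForm, coeff_sum, coeff_C_mul, coeff_X, Finsupp.single_left_inj]

theorem linearForm_one (k : σ) : linearForm (1 : Matrix σ σ R) k = X k := by
  simp [linearForm, one_apply]

theorem linearForm_diagonal (lam : σ → R) (k : σ) :
    linearForm (Matrix.diagonal lam) k = C (lam k) * X k := by
  simp [linearForm, diagonal_apply, apply_ite C, ite_mul]

theorem substCoeff_one (m d : σ →₀ ℕ) :
    substCoeff (1 : Matrix σ σ R) m d = if m = d then 1 else 0 := by
  simp only [substCoeff, linearForm_one, prod_X_pow, coeff_monomial]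

theorem substCoeff_diagonal (lam : σ → R) (m d : σ →₀ ℕ) :
    substCoeff (Matrix.diagonal lam) m d = if m = d then ∏ k, lam k ^ m k else 0 := by
  simp only [substCoeff, linearForm_diagonal, mul_pow, prod_mul_distrib, ← map_pow, ← map_prod,
    prod_X_pow, coeff_C_mul, coeff_monomial, mul_ite, mul_one, mul_zero]

theorem substCoeff_mul (A B : Matrix σ σ R) {N : ℕ} {m : σ →₀ ℕ} (hm : m.degree = N)
    (d : σ →₀ ℕ) : substCoeff (B * A) m d
      = ∑ e : ExponentsOfDegree σ N, substCoeff B m e * substCoeff A e d := by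
  set q := ∏ k, linearForm B k ^ m k
  have hq : q.support ⊆ finsuppAntidiag univ N := fun e he => by
    by_contra hne
    exact mem_support_iff.mp he <| (isHomogeneous_prod_linearForm_pow B m).coeff_eq_zero
      (hm ▸ mt mem_finsuppAntidiag_univ.mpr hne)
  have hsubst : ∏ k, linearForm (B * A) k ^ m k = aeval (linearForm A) q := by
    simp only [q, map_prod, map_pow, aeval_linearForm]
  rw [sum_exponentsOfDegree N fun e => substCoeff B m e * substCoeff A e d,
    ← sum_subset hq fun e _ he => by rw [substCoeff, notMem_support_iff.mp he, zero_mul],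
    substCoeff, hsubst, aeval_def, eval₂_eq', coeff_sum]
  simp only [substCoeff, algebraMap_eq, coeff_C_mul, q]

/-- The matrix of `p ↦ p ∘ A` on homogeneous polynomials of degree `N`. -/
noncomputable def compMatrix (A : Matrix σ σ R) (N : ℕ) :
    Matrix (ExponentsOfDegree σ N) (ExponentsOfDegree σ N) R :=
  fun d m => substCoeff A m d

theorem compMatrix_mul (A B : Matrix σ σ R) (N : ℕ) :
    compMatrix A N * compMatrix B N = compMatrix (B * A) N := by
  ext d m
  simp only [compMatrix, mul_apply, substCoeff_mul A B m.2, mul_comm]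

theorem compMatrix_one (N : ℕ) : compMatrix (1 : Matrix σ σ R) N = 1 := by
  ext d m
  simp [compMatrix, substCoeff_one, one_apply, Subtype.ext_iff, eq_comm]

theorem compMatrix_diagonal (lam : σ → R) (N : ℕ) :
    compMatrix (Matrix.diagonal lam) N = Matrix.diagonal fun d => ∏ k, lam k ^ d.1 k := by
  ext d m
  rcases eq_or_ne d m with rfl | h
  · simp [compMatrix, substCoeff_diagonal]
  · simp [compMatrix, substCoeff_diagonal, h, Subtype.coe_ne_coe.mpr h.symm]

theorem substCoeff_single (A : Matrix σ σ R) (j : σ) (d : σ →₀ ℕ) :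
    substCoeff A (Finsupp.single j 1) d = ∑ k, if d = Finsupp.single k 1 then A j k else 0 := by
  simp [substCoeff, Finsupp.single_apply, linearForm, coeff_sum, coeff_C_mul, coeff_X, eq_comm]

end LinearSubstitution

section Homological

open Kronecker

variable {σ R : Type*} [Fintype σ] [DecidableEq σ] [CommRing R]

/-- The matrix of `h ↦ h ∘ A - A * h` on `σ`-tuples of homogeneous polynomials of degree `N`. -/
noncomputable def homologicalMatrix (A : Matrix σ σ R) (N : ℕ) :
    Matrix (ExponentsOfDegree σ N × σ) (ExponentsOfDegree σ N × σ) R :=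
  compMatrix A N ⊗ₖ 1 - 1 ⊗ₖ A

theorem homologicalMatrix_mulVec_apply (A : Matrix σ σ R) (N : ℕ)
    (x : ExponentsOfDegree σ N × σ → R) (d : ExponentsOfDegree σ N) (j : σ) :
    (homologicalMatrix A N *ᵥ x) (d, j)
      = ∑ m : ExponentsOfDegree σ N, substCoeff A m d * x (m, j) - ∑ k, A j k * x (d, k) := by
  simp [homologicalMatrix, mulVec, dotProduct, kroneckerMap_apply, one_apply,
    Fintype.sum_prod_type, compMatrix, sub_mul, ite_mul, sum_sub_distrib]

theorem det_homologicalMatrix_conj {P : Matrix σ σ R} (hP : IsUnit P.det) (B : Matrix σ σ R)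
    (N : ℕ) : (homologicalMatrix (P * B * P⁻¹) N).det = (homologicalMatrix B N).det := by
  have hPP : P * P⁻¹ = 1 := mul_nonsing_inv P hP
  set U := compMatrix P⁻¹ N ⊗ₖ P
  set V := compMatrix P N ⊗ₖ P⁻¹
  have hUV : U * V = 1 := by
    rw [← mul_kronecker_mul, compMatrix_mul, hPP, compMatrix_one, one_kronecker_one]
  have hconj : homologicalMatrix (P * B * P⁻¹) N = U * homologicalMatrix B N * V := by
    rw [homologicalMatrix, homologicalMatrix, mul_sub, sub_mul, ← mul_kronecker_mul,
      ← mul_kronecker_mul, ← mul_kronecker_mul, ← mul_kronecker_mul, mul_one, mul_one,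
      compMatrix_mul, compMatrix_mul, compMatrix_mul, hPP, compMatrix_one, ← mul_assoc]
  rw [hconj, det_mul, det_mul, mul_right_comm, ← det_mul, hUV, det_one, one_mul]

theorem homologicalMatrix_diagonal (lam : σ → R) (N : ℕ) :
    homologicalMatrix (diagonal lam) N
      = diagonal fun p : ExponentsOfDegree σ N × σ => ∏ k, lam k ^ p.1.1 k - lam p.2 := by
  rw [homologicalMatrix, compMatrix_diagonal, ← diagonal_one, ← diagonal_one,
    diagonal_kronecker_diagonal, diagonal_kronecker_diagonal, diagonal_sub]
  simp

theorem isUnit_det_homologicalMatrix {K : Type*} [Field K] {A P : Matrix σ σ K} {lam : σ → K}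
    (hP : IsUnit P.det) (hA : A = P * diagonal lam * P⁻¹) {N : ℕ}
    (hres : ∀ d : σ →₀ ℕ, d.degree = N → ∀ j, lam j ≠ ∏ k, lam k ^ d k) :
    IsUnit (homologicalMatrix A N).det := by
  rw [hA, det_homologicalMatrix_conj hP, homologicalMatrix_diagonal, det_diagonal,
    isUnit_iff_ne_zero, prod_ne_zero_iff]
  exact fun p _ => sub_ne_zero.mpr (hres p.1 p.1.2 p.2).symm

end Homological

section FormalMaps

open MvPowerSeries

variable {σ R : Type*} [CommSemiring R]

def coeffEquiv : (σ → MvPowerSeries σ R) ≃ ((σ →₀ ℕ) × σ → R) where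
  toFun h p := coeff p.1 (h p.2)
  invFun c j := fun d => c (d, j)
  left_inv _ := rfl
  right_inv _ := rfl

def degreeBlock (c : (σ →₀ ℕ) × σ → R) (N : ℕ) : ExponentsOfDegree σ N × σ → R :=
  fun q => c (q.1, q.2)

theorem normalized_iff_coeff_of_degree_lt_two [DecidableEq σ] {h : σ → MvPowerSeries σ R} :
    ((∀ j, constantCoeff (h j) = 0) ∧
      ∀ j k, coeff (Finsupp.single k 1) (h j) = if j = k then 1 else 0) ↔
    ∀ d j, d.degree < 2 → coeff d (h j) = if d = Finsupp.single j 1 then 1 else 0 := by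
  have hsingle (j k : σ) : (Finsupp.single k 1 = Finsupp.single j 1) ↔ j = k :=
    (Finsupp.single_left_inj one_ne_zero).trans eq_comm
  constructor
  · rintro ⟨h0, h1⟩ d j hd
    obtain hd0 | hd1 : d.degree = 0 ∨ d.degree = 1 := by omega
    · rw [(Finsupp.degree_eq_zero_iff d).mp hd0, coeff_zero_eq_constantCoeff_apply, h0,
        if_neg (Finsupp.single_ne_zero.mpr one_ne_zero).symm]
    · obtain ⟨k, rfl⟩ := degree_eq_one_iff.mp hd1
      simp only [h1, hsingle]
  · intro h
    refine ⟨fun j => ?_, fun j k => ?_⟩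
    · rw [← coeff_zero_eq_constantCoeff_apply, h 0 j (by simp),
        if_neg (Finsupp.single_ne_zero.mpr one_ne_zero).symm]
    · simp only [h (Finsupp.single k 1) j (by simp), hsingle]

theorem homogeneousComponent_one_eq_linearForm [Fintype σ] [DecidableEq σ]
    {f : σ → MvPowerSeries σ R} {A : Matrix σ σ R}
    (hf1 : ∀ j k, coeff (Finsupp.single k 1) (f j) = A j k) (j : σ) :
    homogeneousComponent 1 (f j) = (linearForm A j : MvPowerSeries σ R) := by
  ext d
  rw [coeff_homogeneousComponent, MvPolynomial.coeff_coe]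
  split_ifs with hd
  · obtain ⟨l, rfl⟩ := degree_eq_one_iff.mp hd
    rw [hf1, coeff_single_linearForm]
  · exact ((isHomogeneous_linearForm A j).coeff_eq_zero hd).symm

theorem coeff_prod_pow_of_degree_eq [Fintype σ] [DecidableEq σ]
    {f : σ → MvPowerSeries σ R} {A : Matrix σ σ R} (hf0 : ∀ j, constantCoeff (f j) = 0)
    (hf1 : ∀ j k, coeff (Finsupp.single k 1) (f j) = A j k) {m d : σ →₀ ℕ}
    (hd : d.degree = m.degree) : coeff d (∏ k, f k ^ m k) = substCoeff A m d := by
  calc coeff d (∏ k, f k ^ m k)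
      = coeff d (homogeneousComponent m.degree (∏ k, f k ^ m k)) := by
        rw [coeff_homogeneousComponent, if_pos hd]
    _ = coeff d (∏ k, (linearForm A k : MvPowerSeries σ R) ^ m k) := by
        simp only [homogeneousComponent_prod_pow hf0, homogeneousComponent_one_eq_linearForm hf1]
    _ = substCoeff A m d := by
        simp only [substCoeff, ← MvPolynomial.coeff_coe,
          ← MvPolynomial.coeToMvPowerSeries.ringHom_apply, map_prod, map_pow]

end FormalMaps

section Linearization

open MvPowerSeries

variable {n : ℕ} (A : Matrix (Fin n) (Fin n) ℂ) (f : Fin n → MvPowerSeries (Fin n) ℂ)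

def IsFormalLinearization (h : Fin n → MvPowerSeries (Fin n) ℂ) : Prop :=
  (∀ j, constantCoeff (h j) = 0) ∧
  (∀ j k, coeff (Finsupp.single k 1) (h j) = if j = k then 1 else 0) ∧
  ∀ j, mvComp (h j) f = ∑ k, A j k • h k

/-- The contribution of the coefficients `c (e, j)` with `|e| < N` to the degree-`N`
coefficients of `mvComp (h j) f`, where `c` are the coefficients of `h`. -/
noncomputable def lowerOrderTerms (c : (Fin n →₀ ℕ) × Fin n → ℂ) (N : ℕ) :
    ExponentsOfDegree (Fin n) N × Fin n → ℂ :=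
  fun q => ∑ e ∈ lowerExponents (Fin n) N, c (e, q.2) * coeff q.1 (∏ k, f k ^ e k)

/-- The coefficients of the formal linearizations are the fixed points of this map: degrees `0`
and `1` are prescribed by the normalization, degree `N ≥ 2` is solved from the homological
equation in terms of the lower degrees. -/
noncomputable def linearizationStep (c : (Fin n →₀ ℕ) × Fin n → ℂ) :
    (Fin n →₀ ℕ) × Fin n → ℂ :=
  fun p => if p.1.degree < 2 then if p.1 = Finsupp.single p.2 1 then 1 else 0
    else ((homologicalMatrix A p.1.degree)⁻¹ *ᵥ -lowerOrderTerms f c p.1.degree) (⟨p.1, rfl⟩, p.2)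

variable {A f}

theorem coeff_mvComp (hf0 : ∀ j, constantCoeff (f j) = 0)
    (hf1 : ∀ j k, coeff (Finsupp.single k 1) (f j) = A j k) (g : MvPowerSeries (Fin n) ℂ)
    (d : Fin n →₀ ℕ) :
    coeff d (mvComp g f)
      = ∑ e ∈ lowerExponents (Fin n) d.degree, coeff e g * coeff d (∏ k, f k ^ e k)
        + ∑ m : ExponentsOfDegree (Fin n) d.degree, substCoeff A m d * coeff m g := by
  have hdef : coeff d (mvComp g f) = ∑ m ∈ Iic (Finsupp.equivFunOnFinite.symm fun _ => d.degree),
      coeff m g * coeff d (∏ k, f k ^ m k) := rfl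
  rw [hdef, sum_Iic_eq_sum_lowerExponents_add d.degree fun e he => by
    rw [coeff_prod_pow_of_degree_lt hf0 he, mul_zero]]
  congr 1
  exact sum_congr rfl fun m _ => by rw [coeff_prod_pow_of_degree_eq hf0 hf1 m.2.symm, mul_comm]

theorem coeff_mvComp_eq_iff (hf0 : ∀ j, constantCoeff (f j) = 0)
    (hf1 : ∀ j k, coeff (Finsupp.single k 1) (f j) = A j k) (h : Fin n → MvPowerSeries (Fin n) ℂ)
    (d : Fin n →₀ ℕ) (j : Fin n) :
    coeff d (mvComp (h j) f) = coeff d (∑ k, A j k • h k) ↔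
      (homologicalMatrix A d.degree *ᵥ degreeBlock (coeffEquiv h) d.degree) (⟨d, rfl⟩, j)
        = (-lowerOrderTerms f (coeffEquiv h) d.degree) (⟨d, rfl⟩, j) := by
  simp only [coeff_mvComp hf0 hf1, homologicalMatrix_mulVec_apply, map_sum, map_smul,
    smul_eq_mul, Pi.neg_apply, lowerOrderTerms, degreeBlock, coeffEquiv]
  constructor <;> intro h <;> linear_combination h

theorem mvComp_eq_sum_smul_iff (hf0 : ∀ j, constantCoeff (f j) = 0)
    (hf1 : ∀ j k, coeff (Finsupp.single k 1) (f j) = A j k) (h : Fin n → MvPowerSeries (Fin n) ℂ) :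
    (∀ j, mvComp (h j) f = ∑ k, A j k • h k) ↔
      ∀ N, homologicalMatrix A N *ᵥ degreeBlock (coeffEquiv h) N
        = -lowerOrderTerms f (coeffEquiv h) N := by
  refine Iff.trans ?_ ((forall_congr' fun N => funext_iff).trans forall_exponentsOfDegree_iff).symm
  simp only [← coeff_mvComp_eq_iff hf0 hf1, MvPowerSeries.ext_iff, Prod.forall]
  exact forall_comm

theorem homologicalMatrix_mulVec_degreeBlock_of_lt_two {c : (Fin n →₀ ℕ) × Fin n → ℂ}
    (hc : ∀ d j, d.degree < 2 → c (d, j) = if d = Finsupp.single j 1 then 1 else 0) {N : ℕ}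
    (hN : N < 2) : homologicalMatrix A N *ᵥ degreeBlock c N = -lowerOrderTerms f c N := by
  have hsingle (d : Fin n →₀ ℕ) (j : Fin n) (hd : d.degree ≠ 1) : d ≠ Finsupp.single j 1 :=
    fun h => hd (h ▸ Finsupp.degree_single j 1)
  ext ⟨⟨d, rfl⟩, j⟩
  have hlow : lowerOrderTerms f c d.degree (⟨d, rfl⟩, j) = 0 := sum_eq_zero fun e he => by
    have he' : e.degree < d.degree := (mem_filter.mp he).2
    rw [hc e j (by omega), if_neg (hsingle e j (by omega)), zero_mul]
  rw [homologicalMatrix_mulVec_apply, Pi.neg_apply, hlow, neg_zero]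
  simp only [degreeBlock, hc _ _ hN]
  rw [sum_congr rfl fun (m : ExponentsOfDegree (Fin n) d.degree) _ => by
      rw [hc m.1 j (m.2.trans_lt hN)],
    sum_exponentsOfDegree d.degree fun m =>
      substCoeff A m d * if m = Finsupp.single j 1 then 1 else 0]
  simp only [mul_ite, mul_one, mul_zero, sum_ite_eq', mem_finsuppAntidiag_univ,
    Finsupp.degree_single]
  split_ifs with hd
  · rw [substCoeff_single, sub_self]
  · simp [hsingle d _ (Ne.symm hd)]

theorem linearizationStep_eq_iff (c : (Fin n →₀ ℕ) × Fin n → ℂ) :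
    linearizationStep A f c = c ↔
      (∀ d j, d.degree < 2 → c (d, j) = if d = Finsupp.single j 1 then 1 else 0) ∧
      ∀ N, 2 ≤ N → degreeBlock c N = (homologicalMatrix A N)⁻¹ *ᵥ -lowerOrderTerms f c N := by
  have hhigh : (∀ N, 2 ≤ N → degreeBlock c N = (homologicalMatrix A N)⁻¹ *ᵥ -lowerOrderTerms f c N)
      ↔ ∀ p : (Fin n →₀ ℕ) × Fin n, 2 ≤ p.1.degree → c p = ((homologicalMatrix A p.1.degree)⁻¹ *ᵥ
        -lowerOrderTerms f c p.1.degree) (⟨p.1, rfl⟩, p.2) := by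
    simp only [funext_iff, imp_forall_iff]
    exact forall_exponentsOfDegree_iff (P := fun N q => 2 ≤ N → degreeBlock c N q = _)
  rw [hhigh, funext_iff]
  refine Iff.trans ?_ (and_congr_left' (Prod.forall (p := fun p : (Fin n →₀ ℕ) × Fin n =>
    p.1.degree < 2 → c p = if p.1 = Finsupp.single p.2 1 then 1 else 0)))
  rw [← forall_and]
  refine forall_congr' fun p => ?_
  by_cases hp : p.1.degree < 2
  · simp [linearizationStep, hp, eq_comm]
  · simp [linearizationStep, hp, le_of_not_gt hp, eq_comm]

theorem isFormalLinearization_iff (hf0 : ∀ j, constantCoeff (f j) = 0)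
    (hf1 : ∀ j k, coeff (Finsupp.single k 1) (f j) = A j k)
    (hS : ∀ N, 2 ≤ N → IsUnit (homologicalMatrix A N).det) (h : Fin n → MvPowerSeries (Fin n) ℂ) :
    IsFormalLinearization A f h ↔ linearizationStep A f (coeffEquiv h) = coeffEquiv h := by
  rw [IsFormalLinearization, ← and_assoc, normalized_iff_coeff_of_degree_lt_two,
    mvComp_eq_sum_smul_iff hf0 hf1, linearizationStep_eq_iff]
  refine and_congr_right fun hlow => forall_congr' fun N => ?_
  rcases lt_or_ge N 2 with hN | hN
  · simpa [hN.not_ge] using homologicalMatrix_mulVec_degreeBlock_of_lt_two hlow hN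
  · simp only [hN, forall_const, mulVec_eq_iff_eq_inv_mulVec (hS N hN)]

theorem linearizationStep_congr {c c' : (Fin n →₀ ℕ) × Fin n → ℂ} {p : (Fin n →₀ ℕ) × Fin n}
    (h : ∀ q : (Fin n →₀ ℕ) × Fin n, q.1.degree < p.1.degree → c q = c' q) :
    linearizationStep A f c p = linearizationStep A f c' p := by
  have hlow : lowerOrderTerms f c p.1.degree = lowerOrderTerms f c' p.1.degree :=
    funext fun q => sum_congr rfl fun e he => by rw [h (e, q.2) (mem_filter.mp he).2]
  simp only [linearizationStep, hlow]

end Linearization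

end FormalLinearization

open FormalLinearization

theorem mv_formal_linearization_exists_unique_general (n : ℕ)
    (A : Matrix (Fin n) (Fin n) ℂ)
    (lam : Fin n → ℂ)
    (hdiag : ∃ P : Matrix (Fin n) (Fin n) ℂ, IsUnit P.det ∧
      A = P * Matrix.diagonal lam * P⁻¹)
    (hres : ∀ i : Fin n →₀ ℕ, 2 ≤ i.sum (fun _ v => v) →
      ∀ j : Fin n, lam j ≠ ∏ k : Fin n, lam k ^ i k)
    (f : Fin n → MvPowerSeries (Fin n) ℂ)
    (hf0 : ∀ j : Fin n, MvPowerSeries.constantCoeff (f j) = 0)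
    (hf1 : ∀ j k : Fin n,
      MvPowerSeries.coeff (Finsupp.single k 1) (f j) = A j k) :
    ∃! h : Fin n → MvPowerSeries (Fin n) ℂ,
      (∀ j : Fin n, MvPowerSeries.constantCoeff (h j) = 0) ∧
      (∀ j k : Fin n, MvPowerSeries.coeff (Finsupp.single k 1) (h j)
        = if j = k then 1 else 0) ∧
      ∀ j : Fin n, mvComp (h j) f = ∑ k : Fin n, A j k • h k := by
  obtain ⟨P, hP, hAP⟩ := hdiag
  have hS (N : ℕ) (hN : 2 ≤ N) : IsUnit (homologicalMatrix A N).det :=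
    isUnit_det_homologicalMatrix hP hAP fun d hd => hres d (show 2 ≤ d.degree from hd ▸ hN)
  change ∃! h, IsFormalLinearization A f h
  rw [coeffEquiv.existsUnique_congr (q := fun c => linearizationStep A f c = c)
    (isFormalLinearization_iff hf0 hf1 hS)]
  exact existsUnique_fixedPt_of_dependsOnLower (fun p => p.1.degree) (linearizationStep A f)
    fun _ _ _ => linearizationStep_congr

/-- For `A ∈ GLₙ(ℂ)` diagonalizable with non-resonant eigenvalues `λ₁,…,λₙ`,
every formal map `f : (ℂⁿ,0) → (ℂⁿ,0)` with linear part `A` admits a unique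
formal linearization `h` with `h(0)=0`, `D₀h = I`, `h ∘ f = A ∘ h`. -/
theorem mv_formal_linearization_exists_unique (n : ℕ)
    (A : Matrix (Fin n) (Fin n) ℂ) (hA : IsUnit A.det)
    (lam : Fin n → ℂ)
    (hdiag : ∃ P : Matrix (Fin n) (Fin n) ℂ, IsUnit P.det ∧
      A = P * Matrix.diagonal lam * P⁻¹)
    (hres : ∀ i : Fin n →₀ ℕ, 2 ≤ i.sum (fun _ v => v) →
      ∀ j : Fin n, lam j ≠ ∏ k : Fin n, lam k ^ i k)
    (f : Fin n → MvPowerSeries (Fin n) ℂ)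
    (hf0 : ∀ j : Fin n, MvPowerSeries.constantCoeff (f j) = 0)
    (hf1 : ∀ j k : Fin n,
      MvPowerSeries.coeff (Finsupp.single k 1) (f j) = A j k) :
    ∃! h : Fin n → MvPowerSeries (Fin n) ℂ,
      (∀ j : Fin n, MvPowerSeries.constantCoeff (h j) = 0) ∧
      (∀ j k : Fin n, MvPowerSeries.coeff (Finsupp.single k 1) (h j)
        = if j = k then 1 else 0) ∧
      ∀ j : Fin n, mvComp (h j) f = ∑ k : Fin n, A j k • h k :=
  mv_formal_linearization_exists_unique_general n A lam hdiag hres f hf0 hf1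
end
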